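/- arXiv:1704.02522 — 2 statements merged into one kernel-verified Lean document; each statement's English description precedes it below -/
import Mathlib

section
/- Define the twisted convolution f # g(x) = ∫_G f(y) g(y⁻¹x) conj(σ(y, y⁻¹x)) dy. For F(a,t) = conj(t)f(a) on the Mackey group G_σ (with normalized Haar measure on 𝕋), the group convolution satisfies F * W^{ρ_σ}_u(u)(x,z) = conj(z) · (f # W^ρ_u(u))(x), where W^{ρ_σ}_u(u)(x,t)=conj(t)W^ρ_u(u)(x). -/
open MeasureTheory ComplexConjugate

/-- Mackey multiplication on G × 𝕋 (for `t : Circle` its conjugate is `t⁻¹`). -/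
noncomputable def mackeyMul {G : Type*} [Group G] (σ : G → G → Circle) :
    G × Circle → G × Circle → G × Circle :=
  fun p q => (p.1 * q.1, (σ p.1 q.1)⁻¹ * p.2 * q.2)

/-- Inversion in the Mackey group: (x,t)⁻¹ = (x⁻¹, σ(x,x⁻¹) conj(t)). -/
noncomputable def mackeyInv {G : Type*} [Group G] (σ : G → G → Circle) :
    G × Circle → G × Circle :=
  fun p => (p.1⁻¹, σ p.1 p.1⁻¹ * p.2⁻¹)

/-- With the twisted convolution
f # g(x) = ∫_G f(y) g(y⁻¹x) conj(σ(y,y⁻¹x)) dy, for F(a,t) = conj(t) f(a) and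
the kernel W^{ρ_σ}_u(u)(a,t) = conj(t) φ(a) (where φ = W^ρ_u(u)), the group
convolution on the Mackey group G_σ (with normalized Haar measure on 𝕋)
satisfies F * W^{ρ_σ}_u(u)(x,z) = conj(z) · (f # φ)(x). -/
theorem stmt16 {G : Type*} [Group G] [MeasurableSpace G] [MeasurableSpace Circle]
    (μ : Measure G) [μ.IsMulLeftInvariant]  -- left Haar measure on G
    (ν : Measure Circle) [IsProbabilityMeasure ν]  -- normalized Haar on 𝕋
    (σ : G → G → Circle)
    (hnorm : ∀ x : G, σ x 1 = 1 ∧ σ 1 x = 1)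
    (hcoc : ∀ x y z : G, σ (x * y) z * σ x y = σ x (y * z) * σ y z)
    (f φ : G → ℂ) :
    ∀ (x : G) (z : Circle),
      (∫ y : G, ∫ w : Circle,
          (conj ((w : ℂ)) * f y) *
            (conj (((mackeyMul σ (mackeyInv σ (y, w)) (x, z)).2 : ℂ)) *
              φ (mackeyMul σ (mackeyInv σ (y, w)) (x, z)).1) ∂ν ∂μ) =
        conj ((z : ℂ)) *
          ∫ y : G, f y * φ (y⁻¹ * x) * conj ((σ y (y⁻¹ * x) : ℂ)) ∂μ := by
  intro x z
  simp only [mackeyMul, mackeyInv]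
  have key : ∀ y : G, (σ y⁻¹ x)⁻¹ * σ y y⁻¹ = σ y (y⁻¹ * x) := by
    intro y
    have h := hcoc y y⁻¹ x
    rw [mul_inv_cancel, (hnorm x).2, one_mul] at h
    rw [h, mul_comm (σ y (y⁻¹ * x)), ← mul_assoc, inv_mul_cancel, one_mul]
  have hg : ∀ y : G,
      (∫ w : Circle,
        (conj ((w : ℂ)) * f y) *
          (conj ((((σ y⁻¹ x)⁻¹ * (σ y y⁻¹ * w⁻¹) * z : Circle) : ℂ)) *
            φ (y⁻¹ * x)) ∂ν)
      = conj ((z : ℂ)) * (f y * φ (y⁻¹ * x) * conj ((σ y (y⁻¹ * x) : ℂ))) := by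
    intro y
    have hc : ∀ w : Circle,
        (conj ((w : ℂ)) * f y) *
          (conj ((((σ y⁻¹ x)⁻¹ * (σ y y⁻¹ * w⁻¹) * z : Circle) : ℂ)) *
            φ (y⁻¹ * x))
        = conj ((z : ℂ)) * (f y * φ (y⁻¹ * x) * conj ((σ y (y⁻¹ * x) : ℂ))) := by
      intro w
      have hcirc : w * ((σ y⁻¹ x)⁻¹ * (σ y y⁻¹ * w⁻¹) * z) = σ y (y⁻¹ * x) * z := by
        rw [← key y]; simp [mul_comm, mul_left_comm, mul_assoc, mul_inv_cancel_left, inv_mul_cancel_left]; rw [mul_left_comm w, mul_inv_cancel_left]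
      have : (conj ((w : ℂ))) * conj ((((σ y⁻¹ x)⁻¹ * (σ y y⁻¹ * w⁻¹) * z : Circle) : ℂ))
          = conj ((σ y (y⁻¹ * x) : ℂ)) * conj ((z : ℂ)) := by
        rw [← map_mul, ← Circle.coe_mul, hcirc, Circle.coe_mul, map_mul]
      calc _ = ((conj ((w : ℂ))) * conj ((((σ y⁻¹ x)⁻¹ * (σ y y⁻¹ * w⁻¹) * z : Circle) : ℂ)))
              * (f y * φ (y⁻¹ * x)) := by ring
        _ = _ := by rw [this]; ring
    rw [show (fun w : Circle =>
        (conj ((w : ℂ)) * f y) *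
          (conj ((((σ y⁻¹ x)⁻¹ * (σ y y⁻¹ * w⁻¹) * z : Circle) : ℂ)) *
            φ (y⁻¹ * x))) = fun _ =>
        conj ((z : ℂ)) * (f y * φ (y⁻¹ * x) * conj ((σ y (y⁻¹ * x) : ℂ)))
      from funext hc]
    simp
  simp only [hg]
  rw [integral_const_mul]
end

section
/- For λ ∈ S* and u ∈ S, the wavelet transforms satisfy W^{ρ_σ}_u(λ) * W^{ρ_σ}_u(u)(x,t) = conj(t) · (W^ρ_u(λ) # W^ρ_u(u))(x). Consequently, u is ρ-analyzing (i.e. W^ρ_u(λ) # W^ρ_u(u) = W^ρ_u(λ) for all λ ∈ S*) if and only if u is ρ_σ-analyzing (i.e. W^{ρ_σ}_u(λ) * W^{ρ_σ}_u(u) = W^{ρ_σ}_u(λ) for all λ ∈ S*). -/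
open MeasureTheory ComplexConjugate

/-!
By the cocycle identity at `(y, y⁻¹, x)`, the `𝕋`-component of `(y, w)⁻¹ (x, t)` is
`σ(y, y⁻¹ x) w⁻¹ t`. Hence the integrand of the convolution of two lifts on `G × 𝕋` does not
depend on `w`, and integrating it against the probability measure on `𝕋` leaves `conj t` times
the twisted convolution on `G`.
-/

namespace Mackey

variable {G : Type*} [Group G]

/-- `W^{ρ_σ}_u(λ) = lift (W^ρ_u(λ))`. -/
def lift (f : G → ℂ) (p : G × Circle) : ℂ :=
  conj (p.2 : ℂ) * f p.1

theorem mackeyMul_mackeyInv_snd (σ : G → G → Circle)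
    (h1 : ∀ x, σ 1 x = 1) (hcoc : ∀ x y z, σ (x * y) z * σ x y = σ x (y * z) * σ y z)
    (x y : G) (t w : Circle) :
    (mackeyMul σ (mackeyInv σ (y, w)) (x, t)).2 = σ y (y⁻¹ * x) * w⁻¹ * t := by
  have hσ : σ y (y⁻¹ * x) * σ y⁻¹ x = σ y y⁻¹ := by
    simpa [h1] using (hcoc y y⁻¹ x).symm
  change (σ y⁻¹ x)⁻¹ * (σ y y⁻¹ * w⁻¹) * t = _
  rw [← hσ, mul_comm (σ y _), mul_assoc (σ y⁻¹ x), inv_mul_cancel_left]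

variable [MeasurableSpace G] [MeasurableSpace Circle]

noncomputable def twistedConv (μ : Measure G) (σ : G → G → Circle) (f g : G → ℂ) (x : G) : ℂ :=
  ∫ y, f y * g (y⁻¹ * x) * conj (σ y (y⁻¹ * x) : ℂ) ∂μ

noncomputable def conv (μ : Measure G) (ν : Measure Circle) (σ : G → G → Circle)
    (F H : G × Circle → ℂ) (p : G × Circle) : ℂ :=
  ∫ y, ∫ w, F (y, w) * H (mackeyMul σ (mackeyInv σ (y, w)) p) ∂ν ∂μ

theorem conv_lift_lift (μ : Measure G) (ν : Measure Circle) [IsProbabilityMeasure ν]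
    (σ : G → G → Circle)
    (h1 : ∀ x, σ 1 x = 1) (hcoc : ∀ x y z, σ (x * y) z * σ x y = σ x (y * z) * σ y z)
    (f g : G → ℂ) (x : G) (t : Circle) :
    conv μ ν σ (lift f) (lift g) (x, t) = conj (t : ℂ) * twistedConv μ σ f g x := by
  have hpoint : ∀ y w, lift f (y, w) * lift g (mackeyMul σ (mackeyInv σ (y, w)) (x, t)) =
      conj (t : ℂ) * (f y * g (y⁻¹ * x) * conj (σ y (y⁻¹ * x) : ℂ)) := by
    intro y w
    have hw : (w : ℂ)⁻¹ * w = 1 := inv_mul_cancel₀ (Circle.coe_ne_zero w)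
    simp only [lift, mackeyMul_mackeyInv_snd σ h1 hcoc, Circle.coe_mul, map_mul, map_inv₀,
      ← Circle.coe_inv_eq_conj, Circle.coe_inv, inv_inv]
    rw [show (mackeyMul σ (mackeyInv σ (y, w)) (x, t)).1 = y⁻¹ * x from rfl]
    linear_combination (t : ℂ)⁻¹ * (σ y (y⁻¹ * x) : ℂ)⁻¹ * f y * g (y⁻¹ * x) * hw
  simp only [conv, twistedConv, hpoint, integral_const, probReal_univ, one_smul,
    integral_const_mul]

theorem twistedConv_eq_iff_conv_lift_eq (μ : Measure G) (ν : Measure Circle)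
    [IsProbabilityMeasure ν] (σ : G → G → Circle)
    (h1 : ∀ x, σ 1 x = 1) (hcoc : ∀ x y z, σ (x * y) z * σ x y = σ x (y * z) * σ y z)
    (f g : G → ℂ) :
    (∀ x, twistedConv μ σ f g x = f x) ↔
      ∀ x t, conv μ ν σ (lift f) (lift g) (x, t) = conj (t : ℂ) * f x := by
  simp only [conv_lift_lift μ ν σ h1 hcoc]
  refine ⟨fun h x t => by rw [h], fun h x => ?_⟩
  simpa using h x 1

end Mackey

open Mackey in
/-- Here `λ ∈ S*` is a conjugate-linear functional `l`, and `u ∈ S` enters `S*` through the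
pairing `Λu`, so that `W^ρ_u(λ)(x) = l(ρ(x)u)`, `W^ρ_u(u)(x) = Λu(ρ(x)u)` and
`W^{ρ_σ}_u(λ)(x,t) = conj(t) l(ρ(x)u)`. -/
theorem stmt17_general {G : Type*} [Group G] [MeasurableSpace G] [MeasurableSpace Circle]
    {S : Type*} [AddCommGroup S] [Module ℂ S]
    (μ : Measure G)
    (ν : Measure Circle) [IsProbabilityMeasure ν]  -- normalized Haar on 𝕋
    (σ : G → G → Circle)
    (hnorm : ∀ x : G, σ x 1 = 1 ∧ σ 1 x = 1)
    (hcoc : ∀ x y z : G, σ (x * y) z * σ x y = σ x (y * z) * σ y z)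
    (ρ : G → (S ≃ₗ[ℂ] S))
    (u : S) (Λu : S →ₛₗ[starRingEnd ℂ] ℂ) :
    (∀ (l : S →ₛₗ[starRingEnd ℂ] ℂ) (x : G) (t : Circle),
      (∫ y : G, ∫ w : Circle,
          (conj ((w : ℂ)) * l (ρ y u)) *
            (conj (((mackeyMul σ (mackeyInv σ (y, w)) (x, t)).2 : ℂ)) *
              Λu (ρ (mackeyMul σ (mackeyInv σ (y, w)) (x, t)).1 u)) ∂ν ∂μ) =
        conj ((t : ℂ)) *
          ∫ y : G, l (ρ y u) * Λu (ρ (y⁻¹ * x) u) *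
            conj ((σ y (y⁻¹ * x) : ℂ)) ∂μ) ∧
    ((∀ (l : S →ₛₗ[starRingEnd ℂ] ℂ) (x : G),
        (∫ y : G, l (ρ y u) * Λu (ρ (y⁻¹ * x) u) *
            conj ((σ y (y⁻¹ * x) : ℂ)) ∂μ) = l (ρ x u)) ↔
      (∀ (l : S →ₛₗ[starRingEnd ℂ] ℂ) (x : G) (t : Circle),
        (∫ y : G, ∫ w : Circle,
            (conj ((w : ℂ)) * l (ρ y u)) *
              (conj (((mackeyMul σ (mackeyInv σ (y, w)) (x, t)).2 : ℂ)) *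
                Λu (ρ (mackeyMul σ (mackeyInv σ (y, w)) (x, t)).1 u)) ∂ν ∂μ) =
          conj ((t : ℂ)) * l (ρ x u))) := by
  have h1 : ∀ x, σ 1 x = 1 := fun x => (hnorm x).2
  exact ⟨fun l => conv_lift_lift μ ν σ h1 hcoc (fun y => l (ρ y u)) (fun y => Λu (ρ y u)),
    forall_congr' fun l =>
      twistedConv_eq_iff_conv_lift_eq μ ν σ h1 hcoc (fun y => l (ρ y u)) (fun y => Λu (ρ y u))⟩

/-- For λ ∈ S* (modeled as a conjugate-linear functional `l`) and
u ∈ S (viewed in S* via the pairing `Λu`, so that W^ρ_u(u)(x) = Λu(ρ(x)u) and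
W^ρ_u(λ)(x) = l(ρ(x)u), with W^{ρ_σ}_u(λ)(x,t) = conj(t) l(ρ(x)u)):
W^{ρ_σ}_u(λ) * W^{ρ_σ}_u(u)(x,t) = conj(t) · (W^ρ_u(λ) # W^ρ_u(u))(x), where *
is group convolution on G_σ = G × 𝕋 (with normalized Haar measure on 𝕋) and
# is the twisted convolution on G. Consequently u is ρ-analyzing iff u is
ρ_σ-analyzing. -/
theorem stmt17 {G : Type*} [Group G] [MeasurableSpace G] [MeasurableSpace Circle]
    {S : Type*} [AddCommGroup S] [Module ℂ S]
    (μ : Measure G) [μ.IsMulLeftInvariant]  -- left Haar measure on G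
    (ν : Measure Circle) [IsProbabilityMeasure ν]  -- normalized Haar on 𝕋
    (σ : G → G → Circle)
    (hnorm : ∀ x : G, σ x 1 = 1 ∧ σ 1 x = 1)
    (hcoc : ∀ x y z : G, σ (x * y) z * σ x y = σ x (y * z) * σ y z)
    (ρ : G → (S ≃ₗ[ℂ] S))
    (hone : ρ 1 = LinearEquiv.refl ℂ S)
    (hmul : ∀ x y : G, ∀ v : S, ρ (x * y) v = ((σ x y : ℂ)) • ρ x (ρ y v))
    (u : S) (Λu : S →ₛₗ[starRingEnd ℂ] ℂ) :
    (∀ (l : S →ₛₗ[starRingEnd ℂ] ℂ) (x : G) (t : Circle),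
      (∫ y : G, ∫ w : Circle,
          (conj ((w : ℂ)) * l (ρ y u)) *
            (conj (((mackeyMul σ (mackeyInv σ (y, w)) (x, t)).2 : ℂ)) *
              Λu (ρ (mackeyMul σ (mackeyInv σ (y, w)) (x, t)).1 u)) ∂ν ∂μ) =
        conj ((t : ℂ)) *
          ∫ y : G, l (ρ y u) * Λu (ρ (y⁻¹ * x) u) *
            conj ((σ y (y⁻¹ * x) : ℂ)) ∂μ) ∧
    ((∀ (l : S →ₛₗ[starRingEnd ℂ] ℂ) (x : G),
        (∫ y : G, l (ρ y u) * Λu (ρ (y⁻¹ * x) u) *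
            conj ((σ y (y⁻¹ * x) : ℂ)) ∂μ) = l (ρ x u)) ↔
      (∀ (l : S →ₛₗ[starRingEnd ℂ] ℂ) (x : G) (t : Circle),
        (∫ y : G, ∫ w : Circle,
            (conj ((w : ℂ)) * l (ρ y u)) *
              (conj (((mackeyMul σ (mackeyInv σ (y, w)) (x, t)).2 : ℂ)) *
                Λu (ρ (mackeyMul σ (mackeyInv σ (y, w)) (x, t)).1 u)) ∂ν ∂μ) =
          conj ((t : ℂ)) * l (ρ x u))) :=
  stmt17_general μ ν σ hnorm hcoc ρ u Λu
end
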